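/- Let q and r be distinct primes and let D = V ⋊ Z/r be as above. If g = (v, 0) ∈ V has order q, then the conjugacy class of g in D is {(ζ^i v, 0) : 0 ≤ i ≤ r-1}, a set of exactly r elements. -/

import Mathlib

open Multiplicative

/-- Left multiplication by a unit, as a multiplicative automorphism of the additive
group of the field, written multiplicatively. -/
def unitMulAut (F : Type*) [Field F] : Fˣ →* MulAut (Multiplicative F) where
  toFun u := AddEquiv.toMultiplicative (AddAut.mulLeft u)
  map_one' := by ext x; change ((1 : Fˣ) : F) * toAdd x = toAdd x; simp
  map_mul' u v := by ext x; exact congrArg ofAdd (mul_assoc (u : F) v (toAdd x))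

/-- The group `D = V ⋊ ℤ/r`, where `V` is the additive group of the field `F` and the
generator of `ℤ/r` acts by multiplication by `ζ = χ (ofAdd 1)`; multiplication is
`(v,i)·(w,j) = (v + ζ^i w, i+j)`. -/
abbrev DD {r : ℕ} (F : Type*) [Field F] (χ : Multiplicative (ZMod r) →* Fˣ) :=
  Multiplicative F ⋊[(unitMulAut F).comp χ] Multiplicative (ZMod r)

/-! Since `V` is abelian, conjugating `(v, 0)` by `(w, i)` gives `(ζ^i v, 0)`, so the class of `g`
is the orbit of `v` under `⟨ζ⟩`; it has exactly `r` elements because `v ≠ 0` and `ζ` has order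
`r`. -/

namespace SemidirectProduct

variable {N G : Type*} [CommGroup N] [Group G] {φ : G →* MulAut N}

theorem mul_inl_mul_inv (c : N ⋊[φ] G) (n : N) : c * inl n * c⁻¹ = inl (φ c.right n) :=
  calc c * inl n * c⁻¹
      = inl c.left * (inr c.right * inl n * (inr c.right)⁻¹) * (inl c.left)⁻¹ := by
        conv_lhs => rw [← inl_left_mul_inr_right c]
        group
    _ = inl (φ c.right n) := by
        rw [← map_inv inr, ← inl_aut, ← map_inv, ← map_mul, ← map_mul, mul_inv_cancel_comm]

theorem setOf_isConj_inl (n : N) :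
    {h : N ⋊[φ] G | IsConj (inl n) h} = Set.range fun g => inl (φ g n) := by
  ext h
  simp only [Set.mem_ofPred_eq, isConj_iff, Set.mem_range]
  constructor
  · rintro ⟨c, rfl⟩
    exact ⟨c.right, (mul_inl_mul_inv c n).symm⟩
  · rintro ⟨g, rfl⟩
    exact ⟨inr g, by rw [mul_inl_mul_inv, right_inr]⟩

end SemidirectProduct

theorem MonoidHom.injective_of_orderOf_map_ofAdd_one {G : Type*} [Group G] {n : ℕ} [NeZero n]
    (χ : Multiplicative (ZMod n) →* G) (h : orderOf (χ (ofAdd 1)) = n) :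
    Function.Injective χ := by
  refine (injective_iff_map_eq_one χ).mpr fun a ha => ?_
  have hpow : χ (ofAdd 1) ^ (toAdd a).val = 1 := by
    rwa [← map_pow, ← ofAdd_nsmul, nsmul_one, ZMod.natCast_zmod_val]
  have hdvd := orderOf_dvd_of_pow_eq_one hpow
  rw [h] at hdvd
  rw [← ofAdd_toAdd a, (ZMod.val_eq_zero _).mp (Nat.eq_zero_of_dvd_of_lt hdvd (ZMod.val_lt _))]
  rfl

open SemidirectProduct in
theorem conjugacy_class_of_order_q_element_general {q r : ℕ} (hq : q.Prime) (hr : r.Prime)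
    {F : Type*} [Field F]
    (χ : Multiplicative (ZMod r) →* Fˣ) (hχ : orderOf (χ (ofAdd 1)) = r)
    (g : DD F χ) (hg : g.right = 1) (hord : orderOf g = q) :
    {h : DD F χ | IsConj g h} =
      {h : DD F χ | ∃ i : ZMod r, h = ⟨ofAdd ((χ (ofAdd i) : F) * toAdd g.left), 1⟩} ∧
    {h : DD F χ | IsConj g h}.ncard = r := by
  have : NeZero r := ⟨hr.ne_zero⟩
  have hg_inl : g = inl g.left := SemidirectProduct.ext rfl hg
  have hv : toAdd g.left ≠ 0 := fun h0 => by
    rw [hg_inl, ← ofAdd_toAdd g.left, h0, ofAdd_zero, map_one, orderOf_one] at hord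
    exact hq.one_lt.ne hord
  have hclass : {h : DD F χ | IsConj g h} =
      Set.range fun i : ZMod r => inl (ofAdd ((χ (ofAdd i) : F) * toAdd g.left)) := by
    rw [hg_inl, setOf_isConj_inl]
    exact (Function.Surjective.range_comp ofAdd.surjective _).symm
  have hinj : Function.Injective fun i : ZMod r =>
      (inl (ofAdd ((χ (ofAdd i) : F) * toAdd g.left)) : DD F χ) := fun a b hab =>
    ofAdd.injective <| χ.injective_of_orderOf_map_ofAdd_one hχ <| Units.ext <|
      mul_right_cancel₀ hv (ofAdd.injective (inl_injective hab))
  refine ⟨hclass.trans (Set.ext fun h => exists_congr fun i => eq_comm), ?_⟩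
  rw [hclass, Set.ncard_range_of_injective hinj, Nat.card_zmod]

theorem conjugacy_class_of_order_q_element {q r : ℕ} (hq : q.Prime) (hr : r.Prime)
    (hqr : q ≠ r) {F : Type*} [Field F] [Fintype F] (hF : Fintype.card F = q ^ (r - 1))
    (χ : Multiplicative (ZMod r) →* Fˣ) (hχ : orderOf (χ (ofAdd 1)) = r)
    (g : DD F χ) (hg : g.right = 1) (hord : orderOf g = q) :
    {h : DD F χ | IsConj g h} =
      {h : DD F χ | ∃ i : ZMod r, h = ⟨ofAdd ((χ (ofAdd i) : F) * toAdd g.left), 1⟩} ∧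
    {h : DD F χ | IsConj g h}.ncard = r :=
  conjugacy_class_of_order_q_element_general hq hr χ hχ g hg hord
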